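/- For n ≥ 29, if n = a + b with a, b ≥ 1, ‖a‖ + ‖b‖ = ‖n‖, and ‖a‖ ≤ ‖b‖, then a ≤ 2·n^(log₂3 − 1). -/

import Mathlib

/-- `CanRepr n k` : `n` can be written as an expression in `1, +, ·` using `k` ones. -/
inductive CanRepr : ℕ → ℕ → Prop
  | one : CanRepr 1 1
  | add {a b j k : ℕ} : CanRepr a j → CanRepr b k → CanRepr (a + b) (j + k)
  | mul {a b j k : ℕ} : CanRepr a j → CanRepr b k → CanRepr (a * b) (j + k)

/-- Integer complexity `‖n‖`: least number of ones in an expression for `n`. -/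
noncomputable def cpx (n : ℕ) : ℕ := sInf {k | CanRepr n k}

/-!
Both addends are bounded through `m ≤ 3 ^ (‖m‖ / 3)`, and `n` through `‖n‖ ≤ 3 log₂ n`, so that
`M := n ^ log₂ 3` satisfies `3 ^ (‖n‖ / 3) ≤ M`. Since `‖a‖ + ‖b‖ = ‖n‖`, this gives `a b ≤ M`, and
since `‖a‖ ≤ ‖b‖` also `a ^ 2 ≤ M`. Hence `a n = a ^ 2 + a b ≤ 2 M`, i.e. `a ≤ 2 n ^ (log₂ 3 - 1)`.
-/

namespace CanRepr

theorem one_le {m k : ℕ} (h : CanRepr m k) : 1 ≤ m ∧ 1 ≤ k := by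
  induction h with
  | one => omega
  | add _ _ ih₁ ih₂ => omega
  | mul _ _ ih₁ ih₂ => exact ⟨by nlinarith, by omega⟩

theorem self {n : ℕ} (hn : 1 ≤ n) : CanRepr n n := by
  induction n with
  | zero => omega
  | succ m ih =>
    rcases Nat.eq_zero_or_pos m with rfl | hm
    · exact one
    · exact add (ih hm) one

end CanRepr

theorem succ_pow_three_le {b k : ℕ} (hb : 1 ≤ b) (hk : 1 ≤ k) (hB : b ^ 3 ≤ 3 ^ k) :
    (b + 1) ^ 3 ≤ 3 ^ (k + 1) := by
  rw [pow_succ 3 k]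
  obtain rfl | rfl | hb3 : b = 1 ∨ b = 2 ∨ 3 ≤ b := by omega
  · have : 3 ≤ 3 ^ k := Nat.le_self_pow (by omega) 3
    omega
  · -- `3 ^ k ≥ 8` forces `k ≥ 2`
    have : 9 ≤ 3 ^ k := by
      rcases k with _ | _ | k
      · omega
      · norm_num at hB
      · have := Nat.one_le_pow k 3 (by norm_num)
        rw [pow_add]
        omega
    omega
  · have : (b + 1) ^ 3 ≤ 3 * b ^ 3 := by nlinarith [Nat.mul_le_mul hb3 hb3]
    omega

theorem add_pow_three_le {a b j k : ℕ} (ha : 1 ≤ a) (hb : 1 ≤ b) (hj : 1 ≤ j) (hk : 1 ≤ k)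
    (hA : a ^ 3 ≤ 3 ^ j) (hB : b ^ 3 ≤ 3 ^ k) : (a + b) ^ 3 ≤ 3 ^ (j + k) := by
  wlog hab : a ≤ b generalizing a b j k
  · rw [add_comm a, add_comm j]
    exact this hb ha hk hj hB hA (by omega)
  obtain rfl | ha2 : a = 1 ∨ 2 ≤ a := by omega
  · calc (1 + b) ^ 3 = (b + 1) ^ 3 := by rw [add_comm]
      _ ≤ 3 ^ (k + 1) := succ_pow_three_le hb hk hB
      _ ≤ 3 ^ (j + k) := Nat.pow_le_pow_right (by norm_num) (by omega)
  · calc (a + b) ^ 3 ≤ (a * b) ^ 3 := Nat.pow_le_pow_left (by nlinarith) 3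
      _ = a ^ 3 * b ^ 3 := mul_pow a b 3
      _ ≤ 3 ^ j * 3 ^ k := Nat.mul_le_mul hA hB
      _ = 3 ^ (j + k) := (pow_add 3 j k).symm

theorem CanRepr.pow_three_le {m k : ℕ} (h : CanRepr m k) : m ^ 3 ≤ 3 ^ k := by
  induction h with
  | one => norm_num
  | add h₁ h₂ ih₁ ih₂ =>
    exact add_pow_three_le h₁.one_le.1 h₂.one_le.1 h₁.one_le.2 h₂.one_le.2 ih₁ ih₂
  | @mul a b j k _ _ ih₁ ih₂ =>
    calc (a * b) ^ 3 = a ^ 3 * b ^ 3 := mul_pow a b 3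
      _ ≤ 3 ^ j * 3 ^ k := Nat.mul_le_mul ih₁ ih₂
      _ = 3 ^ (j + k) := (pow_add 3 j k).symm

theorem canRepr_cpx {n : ℕ} (hn : 1 ≤ n) : CanRepr n (cpx n) :=
  Nat.sInf_mem ⟨n, CanRepr.self hn⟩

theorem cpx_le {n k : ℕ} (h : CanRepr n k) : cpx n ≤ k := Nat.sInf_le h

theorem cpx_le_self {n : ℕ} (hn : 1 ≤ n) : cpx n ≤ n := cpx_le (CanRepr.self hn)

theorem pow_three_le_three_pow_cpx {m : ℕ} (hm : 1 ≤ m) : m ^ 3 ≤ 3 ^ cpx m :=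
  (canRepr_cpx hm).pow_three_le

theorem cpx_le_cpx_div_two_add_three {n : ℕ} (hn : 2 ≤ n) : cpx n ≤ cpx (n / 2) + 3 := by
  have hhalf : CanRepr (2 * (n / 2)) (2 + cpx (n / 2)) :=
    .mul (.add .one .one) (canRepr_cpx (by omega))
  obtain hn2 | hn2 : 2 * (n / 2) = n ∨ 2 * (n / 2) + 1 = n := by omega
  · have := cpx_le (hn2 ▸ hhalf)
    omega
  · have := cpx_le (hn2 ▸ hhalf.add .one)
    omega

theorem two_pow_cpx_le {n : ℕ} (hn : 2 ≤ n) : 2 ^ cpx n ≤ n ^ 3 := by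
  induction n using Nat.strong_induction_on with
  | _ n ih =>
    obtain hn4 | hn4 : n < 4 ∨ 4 ≤ n := by omega
    · calc 2 ^ cpx n ≤ 2 ^ n := Nat.pow_le_pow_right (by norm_num) (cpx_le_self (by omega))
        _ ≤ n ^ 3 := by interval_cases n <;> norm_num
    · calc 2 ^ cpx n ≤ 2 ^ (cpx (n / 2) + 3) :=
            Nat.pow_le_pow_right (by norm_num) (cpx_le_cpx_div_two_add_three hn)
        _ = 8 * 2 ^ cpx (n / 2) := by ring
        _ ≤ 8 * (n / 2) ^ 3 := Nat.mul_le_mul_left 8 (ih (n / 2) (by omega) (by omega))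
        _ = (2 * (n / 2)) ^ 3 := by ring
        _ ≤ n ^ 3 := Nat.pow_le_pow_left (Nat.mul_div_le n 2) 3

theorem three_pow_le_rpow_logb {x : ℝ} {k : ℕ} (h : (2 : ℝ) ^ k ≤ x) :
    (3 : ℝ) ^ k ≤ x ^ Real.logb 2 3 := by
  calc (3 : ℝ) ^ k = ((2 : ℝ) ^ Real.logb 2 3) ^ k := by rw [Real.rpow_logb] <;> norm_num
    _ = ((2 : ℝ) ^ k) ^ Real.logb 2 3 := Real.rpow_pow_comm (by norm_num) _ _
    _ ≤ x ^ Real.logb 2 3 :=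
        Real.rpow_le_rpow (by positivity) h (Real.logb_nonneg (by norm_num) (by norm_num))

theorem three_pow_cpx_le {n : ℕ} (hn : 2 ≤ n) :
    (3 : ℝ) ^ cpx n ≤ ((n : ℝ) ^ Real.logb 2 3) ^ 3 := by
  rw [Real.rpow_pow_comm n.cast_nonneg]
  exact three_pow_le_rpow_logb (by exact_mod_cast two_pow_cpx_le hn)

theorem mul_le_of_pow_three_le {x y M : ℝ} {j k : ℕ} (hy : 0 ≤ y) (hM : 0 ≤ M)
    (hxj : x ^ 3 ≤ 3 ^ j) (hyk : y ^ 3 ≤ 3 ^ k) (hjk : (3 : ℝ) ^ (j + k) ≤ M ^ 3) :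
    x * y ≤ M := by
  refine le_of_pow_le_pow_left₀ three_ne_zero hM ?_
  calc (x * y) ^ 3 = x ^ 3 * y ^ 3 := mul_pow x y 3
    _ ≤ 3 ^ j * 3 ^ k := mul_le_mul hxj hyk (by positivity) (by positivity)
    _ = 3 ^ (j + k) := (pow_add 3 j k).symm
    _ ≤ M ^ 3 := hjk

theorem smallest_addend_general (n a b : ℕ) (ha : 1 ≤ a) (hb : 1 ≤ b)
    (hsum : a + b = n) (hcpx : cpx a + cpx b = cpx n) (hab : cpx a ≤ cpx b) :
    (a : ℝ) ≤ 2 * (n : ℝ) ^ (Real.logb 2 3 - 1) := by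
  set M := (n : ℝ) ^ Real.logb 2 3
  have hn : (0 : ℝ) < n := by exact_mod_cast (show 0 < n by omega)
  have hM : 0 ≤ M := by positivity
  have hA : (a : ℝ) ^ 3 ≤ 3 ^ cpx a := by exact_mod_cast pow_three_le_three_pow_cpx ha
  have hB : (b : ℝ) ^ 3 ≤ 3 ^ cpx b := by exact_mod_cast pow_three_le_three_pow_cpx hb
  have hN : (3 : ℝ) ^ (cpx a + cpx b) ≤ M ^ 3 := hcpx ▸ three_pow_cpx_le (by omega)
  have hab_le : (a : ℝ) * b ≤ M := mul_le_of_pow_three_le (by positivity) hM hA hB hN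
  have haa_le : (a : ℝ) * a ≤ M := mul_le_of_pow_three_le (by positivity) hM hA hA
    ((pow_le_pow_right₀ (by norm_num) (by omega)).trans hN)
  have hsum' : (a : ℝ) + b = n := by exact_mod_cast hsum
  have hn_le : (a : ℝ) * n ≤ 2 * M := by
    rw [← hsum']
    linarith
  rwa [Real.rpow_sub_one hn.ne', mul_div_assoc', le_div_iff₀ hn]

theorem smallest_addend (n a b : ℕ) (hn : 29 ≤ n) (ha : 1 ≤ a) (hb : 1 ≤ b)
    (hsum : a + b = n) (hcpx : cpx a + cpx b = cpx n) (hab : cpx a ≤ cpx b) :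
    (a : ℝ) ≤ 2 * (n : ℝ) ^ (Real.logb 2 3 - 1) :=
  smallest_addend_general n a b ha hb hsum hcpx hab
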